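/- If two words w_1, w_2 on a totally ordered alphabet are sylvester congruent, then their standardizations std(w_1) and std(w_2) are sylvester congruent permutations. -/

import Mathlib

open scoped Classical

/-- `d` is a diagonal of the convex `(n+2)`-gon with vertices `0,…,n+1`
(in clockwise increasing order): it joins two nonadjacent vertices. -/
def IsDiagonal (n : ℕ) (d : ℕ × ℕ) : Prop :=
  d.1 < d.2 ∧ d.2 ≤ n + 1 ∧ d.2 ≠ d.1 + 1 ∧ ¬(d.1 = 0 ∧ d.2 = n + 1)

/-- Two diagonals of a convex polygon cross. -/
def Crosses (d e : ℕ × ℕ) : Prop :=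
  (d.1 < e.1 ∧ e.1 < d.2 ∧ d.2 < e.2) ∨ (e.1 < d.1 ∧ d.1 < e.2 ∧ e.2 < d.2)

/-- A triangulation of the convex `(n+2)`-gon: `n-1` pairwise noncrossing diagonals. -/
def IsTriangulation (n : ℕ) (D : Finset (ℕ × ℕ)) : Prop :=
  (∀ d ∈ D, IsDiagonal n d) ∧ (∀ d ∈ D, ∀ e ∈ D, ¬ Crosses d e) ∧ D.card = n - 1

/-- `{a,b}` (with `a<b`) is an edge of the triangulation `D`: a polygon side or a diagonal. -/
def IsEdge (n : ℕ) (D : Finset (ℕ × ℕ)) (a b : ℕ) : Prop :=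
  a < b ∧ b ≤ n + 1 ∧ (b = a + 1 ∨ (a = 0 ∧ b = n + 1) ∨ (a, b) ∈ D)

/-- `{a,b,c}` (with `a<b<c`) is a (triangular) face of the triangulation `D`. -/
def IsFace (n : ℕ) (D : Finset (ℕ × ℕ)) (a b c : ℕ) : Prop :=
  a < b ∧ b < c ∧ IsEdge n D a b ∧ IsEdge n D b c ∧ IsEdge n D a c

/-- An ear of a triangulation: a vertex incident to no diagonal. -/
def IsEar (n : ℕ) (D : Finset (ℕ × ℕ)) (v : ℕ) : Prop :=
  v ≤ n + 1 ∧ ∀ d ∈ D, d.1 ≠ v ∧ d.2 ≠ v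

/-- Degree of a vertex: number of edges (polygon sides and diagonals) incident to it. -/
noncomputable def degreeOf (n : ℕ) (D : Finset (ℕ × ℕ)) (v : ℕ) : ℕ :=
  ((Finset.range (n + 2)).filter (fun w => w ≠ v ∧ IsEdge n D (min v w) (max v w))).card

/-- The set of faces of a triangulation, as increasing triples. -/
noncomputable def facesSet (n : ℕ) (D : Finset (ℕ × ℕ)) : Finset (ℕ × ℕ × ℕ) :=
  (Finset.range (n + 2) ×ˢ Finset.range (n + 2) ×ˢ Finset.range (n + 2)).filter
    (fun t => IsFace n D t.1 t.2.1 t.2.2)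

/-- Predecessor of `v` in the vertex set `Y`. -/
def predIn (Y : Finset ℕ) (v : ℕ) : ℕ := WithBot.unbotD 0 (Y.filter (· < v)).max
/-- Successor of `v` in the vertex set `Y`. -/
def succIn (Y : Finset ℕ) (v : ℕ) : ℕ := WithTop.untopD 0 (Y.filter (v < ·)).min

/-- The iterative neighbor-joining construction: for each successive letter,
join its two current neighbors by a diagonal and delete the letter's vertex. -/
def phiAux : List ℕ → Finset ℕ → Finset (ℕ × ℕ)
  | [], _ => ∅
  | [_], _ => ∅
  | v :: rest, Y => insert (predIn Y v, succIn Y v) (phiAux rest (Y.erase v))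

/-- The map `φ` from permutations (standard words, letters `1,…,n`) to
triangulations of the `(n+2)`-gon with vertices `0,…,n+1`. -/
def phiT (n : ℕ) (l : List ℕ) : Finset (ℕ × ℕ) := phiAux l (Finset.range (n + 2))

/-- `t` is the third vertex of a face of `D` containing the polygon side `{i, i+1}`. -/
def FaceOnEdge (n : ℕ) (D : Finset (ℕ × ℕ)) (i t : ℕ) : Prop :=
  (t < i ∧ IsFace n D t i (i + 1)) ∨ (i + 1 < t ∧ IsFace n D i (i + 1) t)

/-- `D` and `D'` differ by one diagonal flip, in the quadrilateral `a<b<c<d`. -/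
def FlipAdj (n : ℕ) (D D' : Finset (ℕ × ℕ)) : Prop :=
  ∃ a b c d : ℕ, a < b ∧ b < c ∧ c < d ∧
    ((IsFace n D a b d ∧ IsFace n D b c d ∧ D' = insert (a, c) (D.erase (b, d))) ∨
     (IsFace n D a b c ∧ IsFace n D a c d ∧ D' = insert (b, d) (D.erase (a, c))))

/-- Sylvester adjacency: `u x z u' y u'' ~ u z x u' y u''` with `x ≤ y < z`. -/
def SylvAdj (w1 w2 : List ℕ) : Prop :=
  ∃ (u u' u'' : List ℕ) (x y z : ℕ), x ≤ y ∧ y < z ∧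
    w1 = u ++ x :: z :: (u' ++ y :: u'') ∧ w2 = u ++ z :: x :: (u' ++ y :: u'')

/-- Sylvester congruence: the equivalence relation generated by sylvester adjacency. -/
def SylvCong : List ℕ → List ℕ → Prop := Relation.EqvGen SylvAdj

/-- Standardization of a word: replace the occurrences of the smallest letter,
left to right, by `1, 2, …`, then continue with the next letter, etc. -/
def stdW (w : List ℕ) : List ℕ :=
  (List.range w.length).map (fun i =>
    (((List.range w.length).filter (fun j =>
      w.getD j 0 < w.getD i 0 ∨ (w.getD j 0 = w.getD i 0 ∧ j < i))).length) + 1)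

/-- Partial sums of an evaluation `μ`. -/
def Msum (μ : ℕ → ℕ) (s : ℕ) : ℕ := ∑ t ∈ Finset.range s, μ t

/-- The color (block index) of the vertex `i` for the increasing coloring `ε_μ`. -/
noncomputable def colOf (μ : ℕ → ℕ) (p i : ℕ) : ℕ :=
  ((Finset.range p).filter (fun s => Msum μ (s + 1) < i)).card

/-- `D`, colored by the increasing coloring `ε_μ`, is a simple colored triangulation. -/
def SimpleFor (n p : ℕ) (μ : ℕ → ℕ) (D : Finset (ℕ × ℕ)) : Prop :=
  IsTriangulation n D ∧
  (∀ d ∈ D, 1 ≤ d.1 → d.2 ≤ n → colOf μ p d.1 ≠ colOf μ p d.2) ∧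
  (∀ i t, 1 ≤ i → i + 1 ≤ n → colOf μ p i = colOf μ p (i + 1) →
    FaceOnEdge n D i t → t < i)

/-- Switched flip: a diagonal flip (preserving vertex colors) whose two adjacent
faces (with middle vertices `b` and `c`) have different colors. -/
def SwFlipAdj (n p : ℕ) (μ : ℕ → ℕ) (D D' : Finset (ℕ × ℕ)) : Prop :=
  ∃ a b c d : ℕ, a < b ∧ b < c ∧ c < d ∧ colOf μ p b ≠ colOf μ p c ∧
    ((IsFace n D a b d ∧ IsFace n D b c d ∧ D' = insert (a, c) (D.erase (b, d))) ∨
     (IsFace n D a b c ∧ IsFace n D a c d ∧ D' = insert (b, d) (D.erase (a, c))))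

/-! Standardization reads the letter at position `i` as the pair `(w i, i)` and replaces it by its
rank in the lexicographic order on these pairs. A sylvester adjacency exchanges two neighbouring
positions `k, k + 1` carrying distinct letters `x < z`, witnessed by a later `y` with `x ≤ y < z`.
Since the letters differ, the exchange does not interact with the tie-break by position, so the
ranks are exchanged in the same way, and the ranks of `x`, `y`, `z` satisfy `X < Y < Z`: the
standardizations are again sylvester adjacent. -/

theorem Relation.EqvGen.map {α β : Type*} {r : α → α → Prop} {s : β → β → Prop} (f : α → β)
    (hf : ∀ a b, r a b → s (f a) (f b)) {a b : α} (h : Relation.EqvGen r a b) :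
    Relation.EqvGen s (f a) (f b) := by
  induction h with
  | rel a b hab => exact .rel _ _ (hf a b hab)
  | refl a => exact .refl _
  | symm a b _ ih => exact .symm _ _ ih
  | trans a b c _ _ ih₁ ih₂ => exact .trans _ _ _ ih₁ ih₂

theorem List.ext_getD' {α : Type*} {l l' : List α} (d : α) (hlen : l.length = l'.length)
    (h : ∀ i, l.getD i d = l'.getD i d) : l = l' :=
  List.ext_getElem hlen fun i h₁ h₂ => by
    simpa only [List.getD_eq_getElem _ _ h₁, List.getD_eq_getElem _ _ h₂] using h i

theorem List.getD_append_cons_cons_swap {α : Type*} (u t : List α) (a b d : α) (i : ℕ) :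
    (u ++ b :: a :: t).getD i d =
      (u ++ a :: b :: t).getD (Equiv.swap u.length (u.length + 1) i) d := by
  rcases lt_or_ge i u.length with hi | hi
  · rw [Equiv.swap_apply_of_ne_of_ne (by omega) (by omega), List.getD_append _ _ _ _ hi,
      List.getD_append _ _ _ _ hi]
  obtain ⟨j, rfl⟩ := Nat.exists_eq_add_of_le hi
  rcases j with _ | _ | j
  · simp
  · simp
  · rw [Equiv.swap_apply_of_ne_of_ne (by omega) (by omega), List.getD_append_right _ _ _ _ hi,
      List.getD_append_right _ _ _ _ hi]
    simp

theorem List.eq_take_append_cons_cons_append_cons {α : Type*} (L : List α) (d : α) {k m : ℕ}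
    (hkm : k + 1 < m) (hm : m < L.length) :
    L = L.take k ++ L.getD k d :: L.getD (k + 1) d ::
      ((L.drop (k + 2)).take (m - (k + 2)) ++ L.getD m d :: L.drop (m + 1)) := by
  have hdrop : ∀ i (hi : i < L.length), L.drop i = L.getD i d :: L.drop (i + 1) := fun i hi => by
    rw [List.drop_eq_getElem_cons hi, List.getD_eq_getElem _ _ hi]
  have hmid : L.drop (k + 2) = (L.drop (k + 2)).take (m - (k + 2)) ++ L.drop m := by
    conv_lhs => rw [← List.take_append_drop (m - (k + 2)) (L.drop (k + 2))]
    rw [List.drop_drop]; congr 2; omega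
  conv_lhs => rw [← List.take_append_drop k L, hdrop k (by omega), hdrop (k + 1) (by omega), hmid,
    hdrop m hm]

def StdBefore (w : List ℕ) (j i : ℕ) : Prop :=
  w.getD j 0 < w.getD i 0 ∨ (w.getD j 0 = w.getD i 0 ∧ j < i)

instance (w : List ℕ) : DecidableRel (StdBefore w) := fun _ _ => by
  unfold StdBefore; infer_instance

noncomputable def stdRank (w : List ℕ) (i : ℕ) : ℕ :=
  ((Finset.range w.length).filter (StdBefore w · i)).card + 1

theorem stdW_eq_map_stdRank (w : List ℕ) :
    stdW w = (List.range w.length).map (stdRank w) := rfl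

theorem length_stdW (w : List ℕ) : (stdW w).length = w.length := by
  simp [stdW]

theorem getD_stdW {w : List ℕ} {i : ℕ} (hi : i < w.length) : (stdW w).getD i 0 = stdRank w i := by
  simp [stdW_eq_map_stdRank, List.getD_eq_getElem?_getD, hi]

theorem StdBefore.trans {w : List ℕ} {i j l : ℕ} (hij : StdBefore w i j) (hjl : StdBefore w j l) :
    StdBefore w i l := by
  unfold StdBefore at *; omega

theorem StdBefore.irrefl (w : List ℕ) (i : ℕ) : ¬ StdBefore w i i := by
  unfold StdBefore; omega

theorem stdRank_lt_stdRank {w : List ℕ} {i j : ℕ} (hi : i < w.length) (h : StdBefore w i j) :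
    stdRank w i < stdRank w j := by
  unfold stdRank
  gcongr
  refine Finset.ssubset_iff_of_subset ?_ |>.2 ⟨i, ?_, ?_⟩
  · intro l hl
    simp only [Finset.mem_filter] at hl ⊢
    exact ⟨hl.1, hl.2.trans h⟩
  · simpa [hi] using h
  · simp [StdBefore.irrefl]

theorem stdBefore_iff_of_swap {w w' : List ℕ} {k : ℕ} (hk : w.getD k 0 ≠ w.getD (k + 1) 0)
    (hw' : ∀ i, w'.getD i 0 = w.getD (Equiv.swap k (k + 1) i) 0) (j i : ℕ) :
    StdBefore w' j i ↔ StdBefore w (Equiv.swap k (k + 1) j) (Equiv.swap k (k + 1) i) := by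
  -- the swap reverses the position order only of `k, k + 1`, whose letters are distinct
  simp only [StdBefore, hw', Equiv.swap_apply_def]
  split_ifs <;> omega

theorem swap_apply_lt_of_lt {k n i : ℕ} (hk : k + 1 < n) (hi : i < n) :
    Equiv.swap k (k + 1) i < n := by
  rw [Equiv.swap_apply_def]; split_ifs <;> omega

theorem stdRank_of_swap {w w' : List ℕ} {k : ℕ} (hkw : k + 1 < w.length)
    (hk : w.getD k 0 ≠ w.getD (k + 1) 0) (hlen : w'.length = w.length)
    (hw' : ∀ i, w'.getD i 0 = w.getD (Equiv.swap k (k + 1) i) 0) (i : ℕ) :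
    stdRank w' i = stdRank w (Equiv.swap k (k + 1) i) := by
  unfold stdRank
  rw [hlen]
  congr 1
  refine Finset.card_nbij' (Equiv.swap k (k + 1)) (Equiv.swap k (k + 1)) ?_ ?_ ?_ ?_
  · intro j hj
    simp only [Finset.mem_coe, Finset.mem_filter, Finset.mem_range] at hj ⊢
    exact ⟨swap_apply_lt_of_lt hkw hj.1, (stdBefore_iff_of_swap hk hw' j i).1 hj.2⟩
  · intro j hj
    simp only [Finset.mem_coe, Finset.mem_filter, Finset.mem_range] at hj ⊢
    refine ⟨swap_apply_lt_of_lt hkw hj.1, (stdBefore_iff_of_swap hk hw' _ i).2 ?_⟩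
    rw [Equiv.swap_apply_self]; exact hj.2
  · intro j _; exact Equiv.swap_apply_self _ _ _
  · intro j _; exact Equiv.swap_apply_self _ _ _

def SylvAdjAt (w w' : List ℕ) (k m : ℕ) : Prop :=
  k + 1 < m ∧ m < w.length ∧ w'.length = w.length ∧
    w.getD k 0 ≤ w.getD m 0 ∧ w.getD m 0 < w.getD (k + 1) 0 ∧
    ∀ i, w'.getD i 0 = w.getD (Equiv.swap k (k + 1) i) 0

theorem sylvAdj_iff_exists_sylvAdjAt {w w' : List ℕ} :
    SylvAdj w w' ↔ ∃ k m, SylvAdjAt w w' k m := by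
  constructor
  · rintro ⟨u, u', u'', x, y, z, hxy, hyz, rfl, rfl⟩
    have hy : (u ++ x :: z :: (u' ++ y :: u'')).getD (u.length + 2 + u'.length) 0 = y := by
      rw [show u.length + 2 + u'.length = (u ++ x :: z :: u').length by simp; omega,
        show u ++ x :: z :: (u' ++ y :: u'') = (u ++ x :: z :: u') ++ y :: u'' by simp,
        List.getD_append_right _ _ _ _ le_rfl, Nat.sub_self]
      rfl
    refine ⟨u.length, u.length + 2 + u'.length, by omega, by simp; omega, by simp, ?_, ?_,
      List.getD_append_cons_cons_swap _ _ _ _ _⟩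
    all_goals rw [hy]; simpa
  · rintro ⟨k, m, hkm, hm, hlen, hxy, hyz, hw'⟩
    have hw := w.eq_take_append_cons_cons_append_cons 0 hkm hm
    have hk : (w.take k).length = k := by simp; omega
    refine ⟨_, _, _, _, _, _, hxy, hyz, hw, List.ext_getD' 0 ?_ fun i => ?_⟩
    · have hlenw := congrArg List.length hw
      simp only [List.length_append, List.length_cons] at hlenw ⊢
      omega
    · rw [hw', List.getD_append_cons_cons_swap, hk, ← hw]

theorem SylvAdjAt.stdW {w w' : List ℕ} {k m : ℕ} (h : SylvAdjAt w w' k m) :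
    SylvAdjAt (stdW w) (stdW w') k m := by
  obtain ⟨hkm, hm, hlen, hxy, hyz, hw'⟩ := h
  have hk : w.getD k 0 ≠ w.getD (k + 1) 0 := by omega
  refine ⟨hkm, by rwa [length_stdW], by rw [length_stdW, length_stdW, hlen], ?_, ?_, fun i => ?_⟩
  · rw [getD_stdW (i := k) (by omega), getD_stdW hm]
    exact (stdRank_lt_stdRank (by omega) (by unfold StdBefore; omega)).le
  · rw [getD_stdW (i := k + 1) (by omega), getD_stdW hm]
    exact stdRank_lt_stdRank hm (Or.inl hyz)
  · rcases lt_or_ge i w.length with hi | hi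
    · rw [getD_stdW (hlen ▸ hi), getD_stdW (swap_apply_lt_of_lt (by omega) hi),
        stdRank_of_swap (by omega) hk hlen hw']
    · rw [Equiv.swap_apply_of_ne_of_ne (by omega) (by omega),
        List.getD_eq_default _ _ (by rw [length_stdW]; omega),
        List.getD_eq_default _ _ (by rw [length_stdW]; omega)]

theorem SylvAdj.stdW {w w' : List ℕ} (h : SylvAdj w w') : SylvAdj (stdW w) (stdW w') := by
  obtain ⟨k, m, hkm⟩ := sylvAdj_iff_exists_sylvAdjAt.1 h
  exact sylvAdj_iff_exists_sylvAdjAt.2 ⟨k, m, hkm.stdW⟩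

/-- If two words are sylvester congruent, then so are their standardizations. -/
theorem stmt12 (w1 w2 : List ℕ) (h : SylvCong w1 w2) :
    SylvCong (stdW w1) (stdW w2) :=
  h.map stdW fun _ _ => SylvAdj.stdW
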